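/- Quantum Pinsker inequality (Frobenius-norm form): for any density matrices ρ and σ on ℂ^d with σ positive definite, the quantum relative entropy satisfies S(ρ‖σ) ≥ (1/(2 ln 2))·‖ρ − σ‖₂². -/

import Mathlib

open scoped ComplexOrder

noncomputable section

/-- The Frobenius (Hilbert–Schmidt) norm of a complex matrix. -/
def frob {m n : Type*} [Fintype m] [Fintype n] (A : Matrix m n ℂ) : ℝ :=
  Real.sqrt (∑ i, ∑ j, ‖A i j‖ ^ 2)

/-- The matrix logarithm base 2, defined by functional calculus (applying `Real.logb 2`
to the eigenvalues in a spectral decomposition). Junk value `0` on non-Hermitian input. -/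
def matLog2 {n : Type*} [Fintype n] [DecidableEq n] (σ : Matrix n n ℂ) : Matrix n n ℂ :=
  if h : σ.IsHermitian then
    (h.eigenvectorUnitary : Matrix n n ℂ) *
      Matrix.diagonal (fun i => (Real.logb 2 (h.eigenvalues i) : ℂ)) *
      (star h.eigenvectorUnitary : Matrix n n ℂ)
  else 0

/-- The quantum relative entropy in bits, S(ρ‖σ) = Tr[ρ log₂ ρ] − Tr[ρ log₂ σ], where
Tr[ρ log₂ ρ] = ∑ᵢ λᵢ log₂ λᵢ over the eigenvalues of ρ (with 0·log₂ 0 = 0) and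
log₂ σ is given by functional calculus. -/
def relEntropy {n : Type*} [Fintype n] [DecidableEq n] (ρ σ : Matrix n n ℂ) : ℝ :=
  (if h : ρ.IsHermitian then ∑ i, h.eigenvalues i * Real.logb 2 (h.eigenvalues i) else 0) -
    (ρ * matLog2 σ).trace.re

/-
Diagonalise `ρ = U diag(λ) U*` and `σ = V diag(μ) V*`. The squared moduli `P i j = |(U* V) i j|²`
of the entries of the unitary `U* V` form a doubly stochastic matrix, and both sides become
`P`-averages: `ln 2 · S(ρ‖σ) = ∑ P i j (λᵢ ln λᵢ - λᵢ ln μⱼ)` and, by unitary invariance of the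
Frobenius norm, `‖ρ - σ‖₂² = ∑ P i j (λᵢ - μⱼ)²`. The inequality then holds termwise by the scalar
bound `a ln a - a ln b ≥ (a - b) + (a - b)² / 2` on `[0, 1]`, because the linear terms average to
`Tr ρ - Tr σ = 0`.
-/

open scoped Matrix

open Matrix Finset

namespace Real

lemma sub_add_sq_div_two_le_mul_log_sub_mul_log {a b : ℝ} (ha₀ : 0 ≤ a) (ha₁ : a ≤ 1)
    (hb₀ : 0 < b) (hb₁ : b ≤ 1) :
    (a - b) + (a - b) ^ 2 / 2 ≤ a * log a - a * log b := by
  set g : ℝ → ℝ := fun x ↦ x * log x - x * log b - (x - b) - (x - b) ^ 2 / 2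
  have hg_cont : Continuous g := by
    have := continuous_mul_log
    fun_prop
  have hg_deriv : ∀ x ≠ 0, HasDerivAt g (log x - log b - (x - b)) x := fun x hx ↦ by
    have h := (((hasDerivAt_mul_log hx).sub ((hasDerivAt_id' x).mul_const (log b))).sub
      ((hasDerivAt_id' x).sub_const b)).sub ((((hasDerivAt_id' x).sub_const b).pow 2).div_const 2)
    exact h.congr_deriv (by ring)
  suffices g b ≤ g a by simp only [g, sub_self] at this; linarith
  -- `g' x = log (x / b) - (x - b)` has the sign of `x - b` on `(0, 1]`: compare `log (x / b)`
  -- with `1 - b / x` for `x ≥ b` and with `x / b - 1` for `x ≤ b`.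
  rcases le_total b a with hba | hab
  · refine monotoneOn_of_hasDerivWithinAt_nonneg (convex_Icc b 1) hg_cont.continuousOn
      (fun x hx ↦ (hg_deriv x ?_).hasDerivWithinAt) (fun x hx ↦ ?_)
      ⟨le_rfl, hb₁⟩ ⟨hba, ha₁⟩ hba
    · rw [interior_Icc] at hx; exact (hb₀.trans hx.1).ne'
    rw [interior_Icc] at hx
    have hx₀ : 0 < x := hb₀.trans hx.1
    have h := one_sub_inv_le_log_of_pos (div_pos hx₀ hb₀)
    rw [log_div hx₀.ne' hb₀.ne', inv_div] at h
    have : x - b ≤ 1 - b / x := by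
      rw [one_sub_div hx₀.ne', le_div_iff₀ hx₀]; nlinarith [hx.1, hx.2]
    linarith
  · refine antitoneOn_of_hasDerivWithinAt_nonpos (convex_Icc 0 b) hg_cont.continuousOn
      (fun x hx ↦ (hg_deriv x ?_).hasDerivWithinAt) (fun x hx ↦ ?_)
      ⟨ha₀, hab⟩ ⟨hb₀.le, le_rfl⟩ hab
    · rw [interior_Icc] at hx; exact hx.1.ne'
    rw [interior_Icc] at hx
    have h := log_le_sub_one_of_pos (div_pos hx.1 hb₀)
    rw [log_div hx.1.ne' hb₀.ne'] at h
    have : x / b - 1 ≤ x - b := by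
      rw [div_sub_one hb₀.ne', div_le_iff₀ hb₀]; nlinarith [hx.1, hx.2]
    linarith

end Real

lemma sum_mul_sq_div_two_le_sum_mul_log {ι κ : Type*} [Fintype ι] [Fintype κ]
    {P : ι → κ → ℝ} {a : ι → ℝ} {b : κ → ℝ} (hP : ∀ i j, 0 ≤ P i j)
    (hP_row : ∀ i, ∑ j, P i j = 1) (hP_col : ∀ j, ∑ i, P i j = 1)
    (ha₀ : ∀ i, 0 ≤ a i) (ha₁ : ∀ i, a i ≤ 1) (hb₀ : ∀ j, 0 < b j) (hb₁ : ∀ j, b j ≤ 1)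
    (hab : ∑ i, a i = ∑ j, b j) :
    (∑ i, ∑ j, P i j * (a i - b j) ^ 2) / 2
      ≤ ∑ i, ∑ j, P i j * (a i * Real.log (a i) - a i * Real.log (b j)) := by
  have h_lin : ∑ i, ∑ j, P i j * (a i - b j) = 0 := by
    simp only [mul_sub, sum_sub_distrib]
    rw [sum_comm (f := fun i j ↦ P i j * b j)]
    simp only [← sum_mul, hP_row, hP_col, one_mul, hab, sub_self]
  calc (∑ i, ∑ j, P i j * (a i - b j) ^ 2) / 2
      = ∑ i, ∑ j, P i j * ((a i - b j) + (a i - b j) ^ 2 / 2) := by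
        simp only [mul_add, sum_add_distrib, h_lin, zero_add, sum_div, mul_div_assoc]
    _ ≤ _ := sum_le_sum fun i _ ↦ sum_le_sum fun j _ ↦ mul_le_mul_of_nonneg_left
        (Real.sub_add_sq_div_two_le_mul_log_sub_mul_log (ha₀ i) (ha₁ i) (hb₀ j) (hb₁ j)) (hP i j)

namespace Matrix

variable {m n : Type*} [Fintype m] [Fintype n]

lemma trace_mul_conjTranspose_self (M : Matrix m n ℂ) :
    (M * Mᴴ).trace = ((∑ i, ∑ j, Complex.normSq (M i j) : ℝ) : ℂ) := by
  simp [trace, mul_apply, Complex.mul_conj]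

lemma frob_sq (M : Matrix m n ℂ) : frob M ^ 2 = ∑ i, ∑ j, Complex.normSq (M i j) := by
  simp only [frob, Complex.normSq_eq_norm_sq]
  exact Real.sq_sqrt (by positivity)

variable [DecidableEq n]

lemma sum_normSq_apply_right {W : Matrix n n ℂ} (hW : W ∈ unitaryGroup n ℂ) (i : n) :
    ∑ j, Complex.normSq (W i j) = 1 := by
  have h := congr_fun (congr_fun (mem_unitaryGroup_iff.mp hW) i) i
  simp only [mul_apply, star_apply, Complex.star_def, Complex.mul_conj, one_apply_eq] at h
  exact_mod_cast h

lemma sum_normSq_apply_left {W : Matrix n n ℂ} (hW : W ∈ unitaryGroup n ℂ) (j : n) :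
    ∑ i, Complex.normSq (W i j) = 1 := by
  simpa [Complex.star_def] using sum_normSq_apply_right (Unitary.star_mem hW) j

lemma frob_unitary_mul_mul_star {U V : Matrix n n ℂ} (hU : U ∈ unitaryGroup n ℂ)
    (hV : V ∈ unitaryGroup n ℂ) (X : Matrix n n ℂ) : frob (U * X * star V) = frob X := by
  have hUU : star U * U = 1 := mem_unitaryGroup_iff'.mp hU
  have hVV : star V * V = 1 := mem_unitaryGroup_iff'.mp hV
  have h : (U * X * star V) * (U * X * star V)ᴴ = U * (X * Xᴴ) * star U := by
    simp only [← star_eq_conjTranspose, star_mul, star_star, Matrix.mul_assoc,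
      ← Matrix.mul_assoc (star V) V, hVV, Matrix.one_mul]
  have h_sq : frob (U * X * star V) ^ 2 = frob X ^ 2 := by
    rw [frob_sq, frob_sq, ← Complex.ofReal_inj, ← trace_mul_conjTranspose_self,
      ← trace_mul_conjTranspose_self, h, trace_mul_cycle, hUU, Matrix.one_mul]
  exact (sq_eq_sq₀ (Real.sqrt_nonneg _) (Real.sqrt_nonneg _)).mp h_sq

lemma trace_conj_diagonal_mul_conj_diagonal (U V : Matrix n n ℂ) (a b : n → ℝ) :
    ((U * diagonal (fun i ↦ (a i : ℂ)) * star U) *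
        (V * diagonal (fun j ↦ (b j : ℂ)) * star V)).trace =
      ((∑ i, ∑ j, a i * b j * Complex.normSq ((star U * V) i j) : ℝ) : ℂ) := by
  set W := star U * V
  have h : (U * diagonal (fun i ↦ (a i : ℂ)) * star U) * (V * diagonal (fun j ↦ (b j : ℂ)) * star V)
      = U * (diagonal (fun i ↦ (a i : ℂ)) * W * diagonal (fun j ↦ (b j : ℂ)) * star V) := by
    simp only [W, Matrix.mul_assoc]
  have hW : star V * U = Wᴴ := by simp only [W, ← star_eq_conjTranspose, star_mul, star_star]
  rw [h, trace_mul_comm, Matrix.mul_assoc _ (star V), hW, trace]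
  push_cast
  refine sum_congr rfl fun i _ ↦ sum_congr rfl fun j _ ↦ ?_
  simp only [diagonal_mul, mul_diagonal, conjTranspose_apply, Complex.star_def]
  rw [← Complex.mul_conj]
  ring

lemma frob_conj_diagonal_sub_conj_diagonal_sq {U V : Matrix n n ℂ} (hU : U ∈ unitaryGroup n ℂ)
    (hV : V ∈ unitaryGroup n ℂ) (a b : n → ℝ) :
    frob (U * diagonal (fun i ↦ (a i : ℂ)) * star U -
        V * diagonal (fun j ↦ (b j : ℂ)) * star V) ^ 2 =
      ∑ i, ∑ j, (a i - b j) ^ 2 * Complex.normSq ((star U * V) i j) := by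
  have h : U * diagonal (fun i ↦ (a i : ℂ)) * star U - V * diagonal (fun j ↦ (b j : ℂ)) * star V
      = U * (diagonal (fun i ↦ (a i : ℂ)) * (star U * V)
          - (star U * V) * diagonal (fun j ↦ (b j : ℂ))) * star V := by
    simp only [Matrix.mul_sub, Matrix.sub_mul, Matrix.mul_assoc, mem_unitaryGroup_iff.mp hV,
      ← Matrix.mul_assoc U (star U), mem_unitaryGroup_iff.mp hU, Matrix.one_mul, Matrix.mul_one]
  rw [h, frob_unitary_mul_mul_star hU hV, frob_sq]
  simp only [sub_apply, diagonal_mul, mul_diagonal]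
  refine sum_congr rfl fun i _ ↦ sum_congr rfl fun j _ ↦ ?_
  rw [mul_comm _ (b j : ℂ), ← sub_mul, Complex.normSq_mul, ← Complex.ofReal_sub,
    Complex.normSq_ofReal, sq]

end Matrix

namespace Matrix

variable {n : Type*} [Fintype n] [DecidableEq n] {A B : Matrix n n ℂ}

namespace IsHermitian

def overlap (hA : A.IsHermitian) (hB : B.IsHermitian) (i j : n) : ℝ :=
  Complex.normSq ((star (hA.eigenvectorUnitary : Matrix n n ℂ) * hB.eigenvectorUnitary) i j)

variable (hA : A.IsHermitian) (hB : B.IsHermitian)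

lemma overlap_nonneg (i j : n) : 0 ≤ hA.overlap hB i j := Complex.normSq_nonneg _

lemma star_eigenvectorUnitary_mul_mem :
    star (hA.eigenvectorUnitary : Matrix n n ℂ) * hB.eigenvectorUnitary ∈ unitaryGroup n ℂ :=
  Submonoid.mul_mem _ (Unitary.star_mem hA.eigenvectorUnitary.2) hB.eigenvectorUnitary.2

lemma sum_overlap_right (i : n) : ∑ j, hA.overlap hB i j = 1 :=
  sum_normSq_apply_right (hA.star_eigenvectorUnitary_mul_mem hB) i

lemma sum_overlap_left (j : n) : ∑ i, hA.overlap hB i j = 1 :=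
  sum_normSq_apply_left (hA.star_eigenvectorUnitary_mul_mem hB) j

lemma conj_diagonal_eigenvalues :
    (hA.eigenvectorUnitary : Matrix n n ℂ) * diagonal (fun i ↦ (hA.eigenvalues i : ℂ)) *
      star (hA.eigenvectorUnitary : Matrix n n ℂ) = A :=
  hA.spectral_theorem.symm

lemma frob_sub_sq_eq_sum_overlap :
    frob (A - B) ^ 2
      = ∑ i, ∑ j, hA.overlap hB i j * (hA.eigenvalues i - hB.eigenvalues j) ^ 2 := by
  conv_lhs => rw [← hA.conj_diagonal_eigenvalues, ← hB.conj_diagonal_eigenvalues]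
  rw [frob_conj_diagonal_sub_conj_diagonal_sq hA.eigenvectorUnitary.2 hB.eigenvectorUnitary.2]
  simp only [overlap, mul_comm]

lemma relEntropy_eq_sum_overlap :
    relEntropy A B = (∑ i, ∑ j, hA.overlap hB i j *
      (hA.eigenvalues i * Real.log (hA.eigenvalues i)
        - hA.eigenvalues i * Real.log (hB.eigenvalues j))) / Real.log 2 := by
  have h_cross : (A * matLog2 B).trace = ((∑ i, ∑ j, hA.eigenvalues i *
      Real.logb 2 (hB.eigenvalues j) * hA.overlap hB i j : ℝ) : ℂ) := by
    rw [matLog2, dif_pos hB]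
    conv_lhs => rw [← hA.conj_diagonal_eigenvalues]
    exact trace_conj_diagonal_mul_conj_diagonal _ _ _ _
  have h_self : ∑ i, hA.eigenvalues i * Real.logb 2 (hA.eigenvalues i)
      = ∑ i, ∑ j, hA.overlap hB i j * (hA.eigenvalues i * Real.logb 2 (hA.eigenvalues i)) := by
    simp only [← sum_mul, hA.sum_overlap_right hB, one_mul]
  rw [relEntropy, dif_pos hA, h_cross, Complex.ofReal_re, h_self, ← sum_sub_distrib, sum_div]
  refine sum_congr rfl fun i _ ↦ ?_
  rw [← sum_sub_distrib, sum_div]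
  refine sum_congr rfl fun j _ ↦ ?_
  simp only [Real.logb]
  ring

lemma sum_eigenvalues_eq_one (h : A.trace = 1) : ∑ i, hA.eigenvalues i = 1 := by
  rw [hA.trace_eq_sum_eigenvalues, ← RCLike.ofReal_sum, ← RCLike.ofReal_one] at h
  exact RCLike.ofReal_inj.mp h

end IsHermitian

lemma PosSemidef.eigenvalues_le_one (hA : A.PosSemidef) (h : A.trace = 1) (i : n) :
    hA.1.eigenvalues i ≤ 1 :=
  hA.1.sum_eigenvalues_eq_one h ▸ single_le_sum (fun j _ ↦ hA.eigenvalues_nonneg j) (mem_univ i)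

end Matrix

theorem quantum_pinsker {d : ℕ} (ρ σ : Matrix (Fin d) (Fin d) ℂ)
    (hρ : ρ.PosSemidef) (hρt : ρ.trace = 1)
    (hσ : σ.PosDef) (hσt : σ.trace = 1) :
    relEntropy ρ σ ≥ (1 / (2 * Real.log 2)) * frob (ρ - σ) ^ 2 := by
  have h_pinsker := sum_mul_sq_div_two_le_sum_mul_log (hρ.1.overlap_nonneg hσ.1)
    (hρ.1.sum_overlap_right hσ.1) (hρ.1.sum_overlap_left hσ.1) hρ.eigenvalues_nonneg
    (hρ.eigenvalues_le_one hρt) hσ.eigenvalues_pos (hσ.posSemidef.eigenvalues_le_one hσt)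
    ((hρ.1.sum_eigenvalues_eq_one hρt).trans (hσ.1.sum_eigenvalues_eq_one hσt).symm)
  rw [ge_iff_le, hρ.1.relEntropy_eq_sum_overlap hσ.1, hρ.1.frob_sub_sq_eq_sum_overlap hσ.1,
    le_div_iff₀ (Real.log_pos one_lt_two)]
  calc 1 / (2 * Real.log 2) * (∑ i, ∑ j, hρ.1.overlap hσ.1 i j *
        (hρ.1.eigenvalues i - hσ.1.eigenvalues j) ^ 2) * Real.log 2
      = (∑ i, ∑ j, hρ.1.overlap hσ.1 i j * (hρ.1.eigenvalues i - hσ.1.eigenvalues j) ^ 2) / 2 := by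
        field_simp
    _ ≤ _ := h_pinsker
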